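/- For every integer n, BP(n) − i·BP(n+1) + j·BP(n+2) − ij·BP(n+3) = −16·P(n+3)·1 + 4·q(n+3)·j. -/

import Mathlib

open scoped TensorProduct

/-! Written in the coordinates `1, i, j, ij`, the left-hand side equals
`(P n + P (n+2) - P (n+4) - P (n+6)) + 2 (P (n+2) + P (n+4)) j` for every integer sequence `P`,
by the multiplication table alone. The Pell recurrence turns the real part into `-16 P (n+3)`,
and `P m + P (m+2) = 2 q (m+1)` because both sides satisfy the Pell recurrence and agree at
`m = 0, 1`. -/

noncomputable def bi : ℂ ⊗[ℝ] ℂ := Complex.I ⊗ₜ[ℝ] 1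
noncomputable def bj : ℂ ⊗[ℝ] ℂ := (1 : ℂ) ⊗ₜ[ℝ] Complex.I
noncomputable def bij : ℂ ⊗[ℝ] ℂ := Complex.I ⊗ₜ[ℝ] Complex.I

/-- The bicomplex Pell number `BP n = P n + P (n+1) i + P (n+2) j + P (n+3) ij`. -/
noncomputable def BP (P : ℤ → ℤ) (n : ℤ) : ℂ ⊗[ℝ] ℂ :=
  (P n : ℝ) • (1 : ℂ ⊗[ℝ] ℂ) + (P (n + 1) : ℝ) • bi + (P (n + 2) : ℝ) • bj +
    (P (n + 3) : ℝ) • bij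

section MulTable

open Algebra.TensorProduct TensorProduct in
attribute [local simp] bi bj bij one_def neg_tmul tmul_neg

theorem bi_mul_bi : bi * bi = -1 := by simp
theorem bi_mul_bj : bi * bj = bij := by simp
theorem bi_mul_bij : bi * bij = -bj := by simp
theorem bj_mul_bi : bj * bi = bij := by simp
theorem bj_mul_bj : bj * bj = -1 := by simp
theorem bj_mul_bij : bj * bij = -bi := by simp
theorem bij_mul_bi : bij * bi = -bj := by simp
theorem bij_mul_bj : bij * bj = -bi := by simp
theorem bij_mul_bij : bij * bij = 1 := by simp

end MulTable

theorem BP_sub_bi_mul_add_bj_mul_sub_bij_mul (P : ℤ → ℤ) (n : ℤ) :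
    BP P n - bi * BP P (n + 1) + bj * BP P (n + 2) - bij * BP P (n + 3) =
      ((P n + P (n + 2) - P (n + 4) - P (n + 6) : ℤ) : ℝ) • (1 : ℂ ⊗[ℝ] ℂ) +
        ((2 * (P (n + 2) + P (n + 4)) : ℤ) : ℝ) • bj := by
  simp only [BP, mul_add, mul_smul_comm, mul_one, bi_mul_bi, bi_mul_bj, bi_mul_bij, bj_mul_bi,
    bj_mul_bj, bj_mul_bij, bij_mul_bi, bij_mul_bj, bij_mul_bij]
  match_scalars <;> ring_nf

section PellRecurrence

variable {R : Type*} [CommRing R]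

theorem eq_zero_of_pell_rec {u : ℤ → R} (a : R) (hu : ∀ n, u (n + 2) = a * u (n + 1) + u n)
    (h0 : u 0 = 0) (h1 : u 1 = 0) (n : ℤ) : u n = 0 := by
  suffices h : ∀ n : ℤ, u n = 0 ∧ u (n + 1) = 0 from (h n).1
  intro n
  induction n using Int.induction_on with
  | zero => simpa using ⟨h0, h1⟩
  | succ k ih =>
    refine ⟨ih.2, ?_⟩
    rw [add_assoc, one_add_one_eq_two, hu, ih.1, ih.2, mul_zero, add_zero]
  | pred k ih =>
    have h := hu (-k - 1)
    rw [show -(k : ℤ) - 1 + 2 = -k + 1 by ring, show -(k : ℤ) - 1 + 1 = -k by ring,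
      ih.1, ih.2, mul_zero, zero_add] at h
    exact ⟨h.symm, by rw [sub_add_cancel]; exact ih.1⟩

variable {P q : ℤ → R} (hP : ∀ n : ℤ, P (n + 2) = 2 * P (n + 1) + P n)
include hP

theorem pell_add_add_two_sub_add_four_sub_add_six (n : ℤ) :
    P n + P (n + 2) - P (n + 4) - P (n + 6) = -16 * P (n + 3) := by
  linear_combination (norm := ring_nf) -hP n + 2 * hP (n + 1) - 6 * hP (n + 2) - 2 * hP (n + 3)
    - hP (n + 4)

theorem pell_add_pell_add_two_eq_two_mul (hP0 : P 0 = 0) (hP1 : P 1 = 1)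
    (hq : ∀ n : ℤ, q (n + 2) = 2 * q (n + 1) + q n) (hq0 : q 0 = 1) (hq1 : q 1 = 1) (m : ℤ) :
    P m + P (m + 2) = 2 * q (m + 1) := by
  refine sub_eq_zero.mp (eq_zero_of_pell_rec (u := fun m ↦ P m + P (m + 2) - 2 * q (m + 1)) 2
    (fun n ↦ ?_) ?_ ?_ m)
  · linear_combination (norm := ring_nf) hP (n + 2) + hP n - 2 * hq (n + 1)
  · linear_combination (norm := ring_nf) hP 0 + 2 * hP1 + 2 * hP0 - 2 * hq1
  · linear_combination (norm := ring_nf)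
      hP 1 + 2 * hP 0 + 6 * hP1 + 2 * hP0 - 2 * hq 0 - 4 * hq1 - 2 * hq0

end PellRecurrence

theorem bicomplexPell_alt_sum (P q : ℤ → ℤ)
    (hP : ∀ n : ℤ, P (n + 2) = 2 * P (n + 1) + P n) (hP0 : P 0 = 0) (hP1 : P 1 = 1)
    (hq : ∀ n : ℤ, q (n + 2) = 2 * q (n + 1) + q n) (hq0 : q 0 = 1) (hq1 : q 1 = 1)
    (n : ℤ) :
    BP P n - bi * BP P (n + 1) + bj * BP P (n + 2) - bij * BP P (n + 3) =
      (-16 * (P (n + 3) : ℝ)) • (1 : ℂ ⊗[ℝ] ℂ) + (4 * (q (n + 3) : ℝ)) • bj := by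
  have hj : P (n + 2) + P (n + 4) = 2 * q (n + 3) := by
    have h := pell_add_pell_add_two_eq_two_mul hP hP0 hP1 hq hq0 hq1 (n + 2)
    rwa [show n + 2 + 2 = n + 4 by ring, show n + 2 + 1 = n + 3 by ring] at h
  rw [BP_sub_bi_mul_add_bj_mul_sub_bij_mul, pell_add_add_two_sub_add_four_sub_add_six hP, hj]
  push_cast
  module
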